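/- Let d1, d2, σ1, σ2 and c11, c12, c21, c22 be positive constants satisfying the bistable condition σ1/c11 > σ2/c21 and σ2/c22 > σ1/c12, let θ ∈ ℝ, and let r1 > 0, r2 > 0 be arbitrary constants. Suppose (u, v) is a pair of nonnegative C² functions on ℝ satisfying d1 u'' + θ u' + u(σ1 − c11 u − c12 v) = 0 and d2 v'' + θ v' + v(σ2 − c21 u − c22 v) = 0 on ℝ, with (u,v)(x) → (σ1/c11, 0) as x → −∞ and (u,v)(x) → (0, σ2/c22) as x → +∞. Then for every x ∈ ℝ: min[r1 σ2/c21, r2 σ1/c12] · min[d1/d2, d2/d1] ≤ r1 u(x) + r2 v(x) ≤ max[r1 σ1/c11, r2 σ2/c22] · max[d1/d2, d2/d1]. -/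

import Mathlib

open Filter Set


/-- If `f b ≤ f x` on an interval `(a,b)` just left of `b`, then `deriv f b ≤ 0`. -/
lemma deriv_nonpos_of_left_ge {f : ℝ → ℝ} {a b : ℝ} (hab : a < b)
    (hf : DifferentiableAt ℝ f b) (hge : ∀ x ∈ Set.Ioo a b, f b ≤ f x) :
    deriv f b ≤ 0 := by
  have hd : HasDerivAt f (deriv f b) b := hf.hasDerivAt
  rw [hasDerivAt_iff_tendsto_slope] at hd
  have h1 : Tendsto (slope f b) (nhdsWithin b (Set.Iio b)) (nhds (deriv f b)) :=
    hd.mono_left (nhdsWithin_mono _ (by intro x hx; exact ne_of_lt hx))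
  have h2 : ∀ᶠ x in nhdsWithin b (Set.Iio b), slope f b x ≤ 0 := by
    filter_upwards [Ioo_mem_nhdsLT_of_mem (Set.mem_Ioc.2 ⟨hab, le_refl b⟩)] with x hx
    have hx' : f b ≤ f x := hge x hx
    have hxb : x - b < 0 := by linarith [hx.2]
    rw [slope_def_field]
    rw [div_nonpos_iff]
    left
    constructor <;> linarith
  exact le_of_tendsto h1 h2

lemma deriv_nonneg_of_left_le {f : ℝ → ℝ} {a b : ℝ} (hab : a < b)
    (hf : DifferentiableAt ℝ f b) (hle : ∀ x ∈ Set.Ioo a b, f x ≤ f b) :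
    0 ≤ deriv f b := by
  have h := deriv_nonpos_of_left_ge (f := fun x => -f x) hab hf.neg
    (by intro x hx; simpa using hle x hx)
  rw [deriv.fun_neg] at h
  linarith

/-- A continuous function with limits at `±∞` both smaller than some value attains a
global maximum. -/
lemma exists_forall_le_of_tendsto {w : ℝ → ℝ} (hw : Continuous w) {A B : ℝ}
    (hA : Tendsto w atBot (nhds A)) (hB : Tendsto w atTop (nhds B))
    {x0 : ℝ} (h1 : A < w x0) (h2 : B < w x0) :
    ∃ x1, ∀ y, w y ≤ w x1 := by
  obtain ⟨R1, hR1⟩ := eventually_atTop.1 (hB.eventually_lt_const h2)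
  obtain ⟨R0, hR0⟩ := eventually_atBot.1 (hA.eventually_lt_const h1)
  set a := min R0 x0 with ha
  set b := max R1 x0 with hb
  have hx0 : x0 ∈ Set.Icc a b := ⟨min_le_right _ _, le_max_right _ _⟩
  obtain ⟨x1, hx1mem, hx1⟩ := (isCompact_Icc (a := a) (b := b)).exists_isMaxOn
    ⟨x0, hx0⟩ hw.continuousOn
  refine ⟨x1, fun y => ?_⟩
  rcases le_or_gt y a with hy | hy
  · rcases lt_or_ge y a with hy' | hy'
    · have : w y < w x0 := hR0 y (le_trans hy'.le (min_le_left _ _))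
      exact le_trans this.le (hx1 hx0)
    · have hya : y = a := le_antisymm hy hy'
      subst hya; exact hx1 ⟨le_refl _, le_trans (min_le_right _ _) (le_max_right _ _)⟩
  · rcases le_or_gt y b with hy2 | hy2
    · exact hx1 ⟨hy.le, hy2⟩
    · have : w y < w x0 := hR1 y (le_trans (le_max_left _ _) hy2.le)
      exact le_trans this.le (hx1 hx0)



lemma deriv_nonneg_of_left_le' {f : ℝ → ℝ} {a b : ℝ} (hab : a < b)
    (hf : DifferentiableAt ℝ f b) (hle : ∀ x ∈ Set.Ioo a b, f x ≤ f b) :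
    0 ≤ deriv f b := by
  have hd : HasDerivAt f (deriv f b) b := hf.hasDerivAt
  rw [hasDerivAt_iff_tendsto_slope] at hd
  have h1 : Tendsto (slope f b) (nhdsWithin b (Set.Iio b)) (nhds (deriv f b)) :=
    hd.mono_left (nhdsWithin_mono _ (by intro x hx; exact ne_of_lt hx))
  have h2 : ∀ᶠ x in nhdsWithin b (Set.Iio b), 0 ≤ slope f b x := by
    filter_upwards [Ioo_mem_nhdsLT_of_mem (Set.mem_Ioc.2 ⟨hab, le_refl b⟩)] with x hx
    have hx' : f x ≤ f b := hle x hx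
    have hxb : x - b < 0 := by linarith [hx.2]
    rw [slope_def_field, div_nonneg_iff]
    right; constructor <;> linarith
  exact ge_of_tendsto h1 h2


lemma coreU (d1 d2 θ K : ℝ) (hd1 : 0 < d1) (hd2 : 0 < d2) (hθ : 0 ≤ θ) (hK : 0 < K)
    (p q : ℝ → ℝ)
    (hp1 : Differentiable ℝ p) (hq1 : Differentiable ℝ q)
    (hp2 : Differentiable ℝ (deriv p)) (hq2 : Differentiable ℝ (deriv q))
    (hp0 : ∀ x, 0 ≤ p x) (hq0 : ∀ x, 0 ≤ q x)
    (Hp Hq : ℝ → ℝ)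
    (hHpdef : Hp = fun y => d1 * deriv p y + θ * p y)
    (hHqdef : Hq = fun y => d2 * deriv q y + θ * q y)
    (hHp : ∀ x, K ≤ p x + q x → 0 ≤ deriv Hp x)
    (hHq : ∀ x, K ≤ p x + q x → 0 ≤ deriv Hq x)
    {B : ℝ} (hB : B < K)
    (htop : Tendsto (fun x => p x + q x) atTop (nhds B))
    (x1 : ℝ) (hmax : ∀ y, p y + q y ≤ p x1 + q x1)
    (hM1 : K * (d2 / d1) < p x1 + q x1) (hM2 : K * (d1 / d2) < p x1 + q x1) :
    False := by
  set w : ℝ → ℝ := fun x => p x + q x with hwdef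
  have hwc : Continuous w := (hp1.continuous).add (hq1.continuous)
  have hwd : Differentiable ℝ w := hp1.add hq1
  have hderivw : ∀ x, deriv w x = deriv p x + deriv q x := fun x => deriv_add (hp1 x) (hq1 x)
  have hKM : K < p x1 + q x1 := by
    rcases le_total d1 d2 with h | h
    · have h1 : (1:ℝ) ≤ d2 / d1 := (one_le_div hd1).2 h
      have h2 := mul_le_mul_of_nonneg_left h1 hK.le
      have h3 : K * 1 = K := mul_one K
      linarith [hM1]
    · have h1 : (1:ℝ) ≤ d1 / d2 := (one_le_div hd2).2 h
      have h2 := mul_le_mul_of_nonneg_left h1 hK.le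
      have h3 : K * 1 = K := mul_one K
      linarith [hM2]
  -- the set S and β
  have hSne : Set.Nonempty {x | x1 ≤ x ∧ w x ≤ K} := by
    obtain ⟨R, hR⟩ := eventually_atTop.1 (htop.eventually_lt_const hB)
    exact ⟨max R x1, le_max_right _ _, (hR _ (le_max_left _ _)).le⟩
  have hSbdd : BddBelow {x | x1 ≤ x ∧ w x ≤ K} := ⟨x1, fun x hx => hx.1⟩
  have hSclosed : IsClosed {x | x1 ≤ x ∧ w x ≤ K} := by
    have : {x | x1 ≤ x ∧ w x ≤ K} = {x | x1 ≤ x} ∩ {x | w x ≤ K} := rfl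
    rw [this]
    exact (isClosed_le continuous_const continuous_id).inter (isClosed_le hwc continuous_const)
  set β := sInf {x | x1 ≤ x ∧ w x ≤ K} with hβdef
  have hβS : x1 ≤ β ∧ w β ≤ K := hSclosed.csInf_mem hSne hSbdd
  have hx1β : x1 < β := by
    rcases hβS.1.eq_or_lt with h | h
    · exfalso
      have h2 := hβS.2
      rw [← h] at h2
      have h3 : p x1 + q x1 ≤ K := h2
      linarith
    · exact h
  have hIco : ∀ x, x1 ≤ x → x < β → K < w x := by
    intro x hx1x hxβ
    by_contra hcon
    push_neg at hcon
    exact absurd (csInf_le hSbdd ⟨hx1x, hcon⟩) (not_le.2 hxβ)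
  have hwβK : w β = K := by
    refine le_antisymm hβS.2 ?_
    have hcont : Tendsto w (nhdsWithin β (Set.Iio β)) (nhds (w β)) :=
      (hwc.continuousAt).continuousWithinAt
    refine ge_of_tendsto hcont ?_
    filter_upwards [Ioo_mem_nhdsLT_of_mem (Set.mem_Ioc.2 ⟨hx1β, le_refl β⟩)] with x hx
    exact (hIco x hx.1.le hx.2).le
  -- monotonicity of Hp, Hq on [x1, β]
  have hHpd : Differentiable ℝ Hp := by
    rw [hHpdef]; exact (hp2.const_mul d1).add (hp1.const_mul θ)
  have hHqd : Differentiable ℝ Hq := by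
    rw [hHqdef]; exact (hq2.const_mul d2).add (hq1.const_mul θ)
  have hmonoHp : MonotoneOn Hp (Set.Icc x1 β) := by
    refine monotoneOn_of_deriv_nonneg (convex_Icc _ _) hHpd.continuous.continuousOn
      hHpd.differentiableOn ?_
    intro x hx
    rw [interior_Icc] at hx
    exact hHp x (hIco x hx.1.le hx.2).le
  have hmonoHq : MonotoneOn Hq (Set.Icc x1 β) := by
    refine monotoneOn_of_deriv_nonneg (convex_Icc _ _) hHqd.continuous.continuousOn
      hHqd.differentiableOn ?_
    intro x hx
    rw [interior_Icc] at hx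
    exact hHq x (hIco x hx.1.le hx.2).le
  have hmemx1 : x1 ∈ Set.Icc x1 β := ⟨le_refl _, hx1β.le⟩
  have hmemβ : β ∈ Set.Icc x1 β := ⟨hx1β.le, le_refl _⟩
  have h1 : d1 * deriv p x1 + θ * p x1 ≤ d1 * deriv p β + θ * p β := by
    have := hmonoHp hmemx1 hmemβ hx1β.le
    simpa only [hHpdef] using this
  have h2 : d2 * deriv q x1 + θ * q x1 ≤ d2 * deriv q β + θ * q β := by
    have := hmonoHq hmemx1 hmemβ hx1β.le
    simpa only [hHqdef] using this
  -- derivative of w at x1 and β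
  have hw'x1 : deriv p x1 + deriv q x1 = 0 := by
    have hlm : IsLocalMax w x1 := Filter.Eventually.of_forall hmax
    have := hlm.deriv_eq_zero
    rw [hderivw x1] at this
    exact this
  have hw'β : deriv p β + deriv q β ≤ 0 := by
    have := deriv_nonpos_of_left_ge (a := x1) (b := β) hx1β (hwd β)
      (fun x hx => by rw [hwβK]; exact (hIco x hx.1.le hx.2).le)
    rw [hderivw β] at this
    exact this
  -- arithmetic endgame
  have hwβsum : p β + q β = K := hwβK
  have hpβK : p β ≤ K := by linarith [hq0 β]
  have hqβK : q β ≤ K := by linarith [hp0 β]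
  rcases hθ.eq_or_lt with hθ0 | hθpos
  · -- θ = 0 : w is monotone on [x1, β]
    have hdp : ∀ x ∈ Set.Icc x1 β, deriv p x1 ≤ deriv p x := by
      intro x hx
      have := hmonoHp hmemx1 hx hx.1
      simp only [hHpdef, ← hθ0, zero_mul, add_zero] at this
      exact le_of_mul_le_mul_left this hd1
    have hdq : ∀ x ∈ Set.Icc x1 β, deriv q x1 ≤ deriv q x := by
      intro x hx
      have := hmonoHq hmemx1 hx hx.1
      simp only [hHqdef, ← hθ0, zero_mul, add_zero] at this
      exact le_of_mul_le_mul_left this hd2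
    have hmonw : MonotoneOn w (Set.Icc x1 β) := by
      refine monotoneOn_of_deriv_nonneg (convex_Icc _ _) hwc.continuousOn
        hwd.differentiableOn ?_
      intro x hx
      rw [interior_Icc] at hx
      have hx' : x ∈ Set.Icc x1 β := ⟨hx.1.le, hx.2.le⟩
      rw [hderivw x]
      linarith [hdp x hx', hdq x hx']
    have h5 := hmonw hmemx1 hmemβ hx1β.le
    have h6 : p x1 + q x1 ≤ p β + q β := h5
    linarith
  · -- θ > 0
    have key1 : θ * (p x1 - p β) ≤ d1 * (deriv p β - deriv p x1) := by linarith
    have key2 : θ * (q x1 - q β) ≤ d2 * (deriv q β - deriv q x1) := by linarith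
    have hsum : (deriv p β - deriv p x1) + (deriv q β - deriv q x1) ≤ 0 := by linarith
    have hab : (p x1 - p β) * d2 + (q x1 - q β) * d1 ≤ 0 := by
      by_contra hcon
      push_neg at hcon
      have t1 : θ * (p x1 - p β) * d2 ≤ d1 * (deriv p β - deriv p x1) * d2 :=
        mul_le_mul_of_nonneg_right key1 hd2.le
      have t2 : θ * (q x1 - q β) * d1 ≤ d2 * (deriv q β - deriv q x1) * d1 :=
        mul_le_mul_of_nonneg_right key2 hd1.le
      have t3 : 0 < θ * ((p x1 - p β) * d2 + (q x1 - q β) * d1) := mul_pos hθpos hcon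
      nlinarith [mul_nonneg hd1.le hd2.le]
    rcases le_total d1 d2 with hdd | hdd
    · have hM1' : K * d2 < (p x1 + q x1) * d1 := by
        have h := mul_lt_mul_of_pos_right hM1 hd1
        have e : K * (d2 / d1) * d1 = K * d2 := by field_simp
        linarith
      have ha : -K ≤ p x1 - p β := by linarith [hp0 x1]
      have hprod : -K * (d2 - d1) ≤ (p x1 - p β) * (d2 - d1) :=
        mul_le_mul_of_nonneg_right ha (by linarith)
      have hwd1 : (p β + q β) * d1 = K * d1 := by rw [hwβsum]
      linarith [hab, hprod, hM1', hwd1]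
    · have hM2' : K * d1 < (p x1 + q x1) * d2 := by
        have h := mul_lt_mul_of_pos_right hM2 hd2
        have e : K * (d1 / d2) * d2 = K * d1 := by field_simp
        linarith
      have hb : -K ≤ q x1 - q β := by linarith [hq0 x1]
      have hprod : -K * (d1 - d2) ≤ (q x1 - q β) * (d1 - d2) :=
        mul_le_mul_of_nonneg_right hb (by linarith)
      have hwd2 : (p β + q β) * d2 = K * d2 := by rw [hwβsum]
      linarith [hab, hprod, hM2', hwd2]

lemma coreL (d1 d2 θ m : ℝ) (hd1 : 0 < d1) (hd2 : 0 < d2) (hθ : 0 ≤ θ) (hm : 0 < m)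
    (p q : ℝ → ℝ)
    (hp1 : Differentiable ℝ p) (hq1 : Differentiable ℝ q)
    (hp2 : Differentiable ℝ (deriv p)) (hq2 : Differentiable ℝ (deriv q))
    (hp0 : ∀ x, 0 ≤ p x) (hq0 : ∀ x, 0 ≤ q x)
    (Hp Hq : ℝ → ℝ)
    (hHpdef : Hp = fun y => d1 * deriv p y + θ * p y)
    (hHqdef : Hq = fun y => d2 * deriv q y + θ * q y)
    (hHp : ∀ x, p x + q x ≤ m → deriv Hp x ≤ 0)
    (hHq : ∀ x, p x + q x ≤ m → deriv Hq x ≤ 0)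
    {B : ℝ} (hB : m < B)
    (htop : Tendsto (fun x => p x + q x) atTop (nhds B))
    (x1 : ℝ) (hmin : ∀ y, p x1 + q x1 ≤ p y + q y)
    (hM1 : p x1 + q x1 < m * (d1 / d2)) (hM2 : p x1 + q x1 < m * (d2 / d1)) :
    False := by
  set w : ℝ → ℝ := fun x => p x + q x with hwdef
  have hwc : Continuous w := (hp1.continuous).add (hq1.continuous)
  have hwd : Differentiable ℝ w := hp1.add hq1
  have hderivw : ∀ x, deriv w x = deriv p x + deriv q x := fun x => deriv_add (hp1 x) (hq1 x)
  have hKM : p x1 + q x1 < m := by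
    rcases le_total d1 d2 with h | h
    · have h1 : d1 / d2 ≤ 1 := (div_le_one hd2).2 h
      have h2 := mul_le_mul_of_nonneg_left h1 hm.le
      have h3 : m * 1 = m := mul_one m
      linarith [hM1]
    · have h1 : d2 / d1 ≤ 1 := (div_le_one hd1).2 h
      have h2 := mul_le_mul_of_nonneg_left h1 hm.le
      have h3 : m * 1 = m := mul_one m
      linarith [hM2]
  have hSne : Set.Nonempty {x | x1 ≤ x ∧ m ≤ w x} := by
    obtain ⟨R, hR⟩ := eventually_atTop.1 (htop.eventually_const_lt hB)
    exact ⟨max R x1, le_max_right _ _, (hR _ (le_max_left _ _)).le⟩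
  have hSbdd : BddBelow {x | x1 ≤ x ∧ m ≤ w x} := ⟨x1, fun x hx => hx.1⟩
  have hSclosed : IsClosed {x | x1 ≤ x ∧ m ≤ w x} := by
    have : {x | x1 ≤ x ∧ m ≤ w x} = {x | x1 ≤ x} ∩ {x | m ≤ w x} := rfl
    rw [this]
    exact (isClosed_le continuous_const continuous_id).inter (isClosed_le continuous_const hwc)
  set β := sInf {x | x1 ≤ x ∧ m ≤ w x} with hβdef
  have hβS : x1 ≤ β ∧ m ≤ w β := hSclosed.csInf_mem hSne hSbdd
  have hx1β : x1 < β := by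
    rcases hβS.1.eq_or_lt with h | h
    · exfalso
      have h2 := hβS.2
      rw [← h] at h2
      have h3 : m ≤ p x1 + q x1 := h2
      linarith
    · exact h
  have hIco : ∀ x, x1 ≤ x → x < β → w x < m := by
    intro x hx1x hxβ
    by_contra hcon
    push_neg at hcon
    exact absurd (csInf_le hSbdd ⟨hx1x, hcon⟩) (not_le.2 hxβ)
  have hwβK : w β = m := by
    refine le_antisymm ?_ hβS.2
    have hcont : Tendsto w (nhdsWithin β (Set.Iio β)) (nhds (w β)) :=
      (hwc.continuousAt).continuousWithinAt
    refine le_of_tendsto hcont ?_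
    filter_upwards [Ioo_mem_nhdsLT_of_mem (Set.mem_Ioc.2 ⟨hx1β, le_refl β⟩)] with x hx
    exact (hIco x hx.1.le hx.2).le
  have hHpd : Differentiable ℝ Hp := by
    rw [hHpdef]; exact (hp2.const_mul d1).add (hp1.const_mul θ)
  have hHqd : Differentiable ℝ Hq := by
    rw [hHqdef]; exact (hq2.const_mul d2).add (hq1.const_mul θ)
  have hantiHp : AntitoneOn Hp (Set.Icc x1 β) := by
    refine antitoneOn_of_deriv_nonpos (convex_Icc _ _) hHpd.continuous.continuousOn
      hHpd.differentiableOn ?_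
    intro x hx
    rw [interior_Icc] at hx
    exact hHp x (hIco x hx.1.le hx.2).le
  have hantiHq : AntitoneOn Hq (Set.Icc x1 β) := by
    refine antitoneOn_of_deriv_nonpos (convex_Icc _ _) hHqd.continuous.continuousOn
      hHqd.differentiableOn ?_
    intro x hx
    rw [interior_Icc] at hx
    exact hHq x (hIco x hx.1.le hx.2).le
  have hmemx1 : x1 ∈ Set.Icc x1 β := ⟨le_refl _, hx1β.le⟩
  have hmemβ : β ∈ Set.Icc x1 β := ⟨hx1β.le, le_refl _⟩
  have h1 : d1 * deriv p β + θ * p β ≤ d1 * deriv p x1 + θ * p x1 := by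
    have := hantiHp hmemx1 hmemβ hx1β.le
    simpa only [hHpdef] using this
  have h2 : d2 * deriv q β + θ * q β ≤ d2 * deriv q x1 + θ * q x1 := by
    have := hantiHq hmemx1 hmemβ hx1β.le
    simpa only [hHqdef] using this
  have hw'x1 : deriv p x1 + deriv q x1 = 0 := by
    have hlm : IsLocalMin w x1 := Filter.Eventually.of_forall hmin
    have := hlm.deriv_eq_zero
    rw [hderivw x1] at this
    exact this
  have hw'β : 0 ≤ deriv p β + deriv q β := by
    have := deriv_nonneg_of_left_le' (a := x1) (b := β) hx1β (hwd β)
      (fun x hx => by rw [hwβK]; exact (hIco x hx.1.le hx.2).le)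
    rw [hderivw β] at this
    exact this
  have hwβsum : p β + q β = m := hwβK
  rcases hθ.eq_or_lt with hθ0 | hθpos
  · -- θ = 0 : w is antitone on [x1, β]
    have hdp : ∀ x ∈ Set.Icc x1 β, deriv p x ≤ deriv p x1 := by
      intro x hx
      have := hantiHp hmemx1 hx hx.1
      simp only [hHpdef, ← hθ0, zero_mul, add_zero] at this
      exact le_of_mul_le_mul_left this hd1
    have hdq : ∀ x ∈ Set.Icc x1 β, deriv q x ≤ deriv q x1 := by
      intro x hx
      have := hantiHq hmemx1 hx hx.1
      simp only [hHqdef, ← hθ0, zero_mul, add_zero] at this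
      exact le_of_mul_le_mul_left this hd2
    have hmonw : AntitoneOn w (Set.Icc x1 β) := by
      refine antitoneOn_of_deriv_nonpos (convex_Icc _ _) hwc.continuousOn
        hwd.differentiableOn ?_
      intro x hx
      rw [interior_Icc] at hx
      have hx' : x ∈ Set.Icc x1 β := ⟨hx.1.le, hx.2.le⟩
      rw [hderivw x]
      linarith [hdp x hx', hdq x hx']
    have h5 := hmonw hmemx1 hmemβ hx1β.le
    have h6 : p β + q β ≤ p x1 + q x1 := h5
    linarith
  · -- θ > 0
    have key1 : d1 * (deriv p β - deriv p x1) ≤ θ * (p x1 - p β) := by linarith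
    have key2 : d2 * (deriv q β - deriv q x1) ≤ θ * (q x1 - q β) := by linarith
    have hsum : 0 ≤ (deriv p β - deriv p x1) + (deriv q β - deriv q x1) := by linarith
    have hab : 0 ≤ (p x1 - p β) * d2 + (q x1 - q β) * d1 := by
      by_contra hcon
      push_neg at hcon
      have t1 : d1 * (deriv p β - deriv p x1) * d2 ≤ θ * (p x1 - p β) * d2 :=
        mul_le_mul_of_nonneg_right key1 hd2.le
      have t2 : d2 * (deriv q β - deriv q x1) * d1 ≤ θ * (q x1 - q β) * d1 :=
        mul_le_mul_of_nonneg_right key2 hd1.le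
      have t3 : θ * ((p x1 - p β) * d2 + (q x1 - q β) * d1) < 0 :=
        mul_neg_of_pos_of_neg hθpos hcon
      nlinarith [mul_nonneg hd1.le hd2.le]
    rcases le_total d1 d2 with hdd | hdd
    · have hM1' : (p x1 + q x1) * d2 < m * d1 := by
        have h := mul_lt_mul_of_pos_right hM1 hd2
        have e : m * (d1 / d2) * d2 = m * d1 := by field_simp
        linarith
      have ha : p x1 - p β ≤ p x1 + q x1 := by linarith [hp0 β, hq0 x1]
      have hprod : (p x1 - p β) * (d2 - d1) ≤ (p x1 + q x1) * (d2 - d1) :=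
        mul_le_mul_of_nonneg_right ha (by linarith)
      have hwd1 : (p β + q β) * d1 = m * d1 := by rw [hwβsum]
      linarith [hab, hprod, hM1', hwd1]
    · have hM2' : (p x1 + q x1) * d1 < m * d2 := by
        have h := mul_lt_mul_of_pos_right hM2 hd1
        have e : m * (d2 / d1) * d1 = m * d2 := by field_simp
        linarith
      have hb : q x1 - q β ≤ p x1 + q x1 := by linarith [hq0 β, hp0 x1]
      have hprod : (q x1 - q β) * (d1 - d2) ≤ (p x1 + q x1) * (d1 - d2) :=
        mul_le_mul_of_nonneg_right hb (by linarith)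
      have hwd2 : (p β + q β) * d2 = m * d2 := by rw [hwβsum]
      linarith [hab, hprod, hM2', hwd2]

set_option maxHeartbeats 1000000 in
lemma upper_half (d1 d2 σ1 σ2 c11 c12 c21 c22 θ r1 r2 : ℝ)
    (hd1 : 0 < d1) (hd2 : 0 < d2) (hσ1 : 0 < σ1) (hσ2 : 0 < σ2)
    (hc11 : 0 < c11) (hc12 : 0 < c12) (hc21 : 0 < c21) (hc22 : 0 < c22)
    (hBiS1 : σ1 / c11 > σ2 / c21) (hBiS2 : σ2 / c22 > σ1 / c12)
    (hr1 : 0 < r1) (hr2 : 0 < r2) (hθ : 0 ≤ θ)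
    (u v : ℝ → ℝ)
    (hu1 : Differentiable ℝ u) (hv1 : Differentiable ℝ v)
    (hu2 : Differentiable ℝ (deriv u)) (hv2 : Differentiable ℝ (deriv v))
    (hu0 : ∀ x, 0 ≤ u x) (hv0 : ∀ x, 0 ≤ v x)
    (hequ : ∀ x, d1 * deriv (deriv u) x + θ * deriv u x
      + u x * (σ1 - c11 * u x - c12 * v x) = 0)
    (heqv : ∀ x, d2 * deriv (deriv v) x + θ * deriv v x
      + v x * (σ2 - c21 * u x - c22 * v x) = 0)
    (LU LV : ℝ) (huP : Tendsto u atTop (nhds LU)) (hvP : Tendsto v atTop (nhds LV))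
    (hL : r1 * LU + r2 * LV ≤ max (r1 * σ1 / c11) (r2 * σ2 / c22))
    (x1 : ℝ) (hmax : ∀ y, r1 * u y + r2 * v y ≤ r1 * u x1 + r2 * v x1)
    (hgt : max (r1 * σ1 / c11) (r2 * σ2 / c22) * max (d1 / d2) (d2 / d1)
      < r1 * u x1 + r2 * v x1) :
    False := by
  set K := max (r1 * σ1 / c11) (r2 * σ2 / c22) with hKdef
  set ρ := max (d1 / d2) (d2 / d1) with hρdef
  set M := r1 * u x1 + r2 * v x1 with hMdef
  have hK : 0 < K := lt_of_lt_of_le (by positivity) (le_max_left _ _)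
  have hρ : 0 < ρ := lt_of_lt_of_le (by positivity) (le_max_left (d1/d2) (d2/d1))
  have cA : r1 * σ1 ≤ K * c11 := (div_le_iff₀ hc11).1 (le_max_left _ _)
  have cB : r2 * σ2 ≤ K * c22 := (div_le_iff₀ hc22).1 (le_max_right _ _)
  have cAB : r2 * σ1 ≤ K * c12 := by
    have e1 : r2 * σ1 / c12 = r2 * (σ1 / c12) := mul_div_assoc _ _ _
    have e2 : r2 * σ2 / c22 = r2 * (σ2 / c22) := mul_div_assoc _ _ _
    have t2 : r2 * σ1 / c12 ≤ r2 * σ2 / c22 := by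
      rw [e1, e2]; exact mul_le_mul_of_nonneg_left hBiS2.le hr2.le
    exact (div_le_iff₀ hc12).1 (t2.trans (le_max_right _ _))
  have cBA : r1 * σ2 ≤ K * c21 := by
    have e1 : r1 * σ2 / c21 = r1 * (σ2 / c21) := mul_div_assoc _ _ _
    have e2 : r1 * σ1 / c11 = r1 * (σ1 / c11) := mul_div_assoc _ _ _
    have t2 : r1 * σ2 / c21 ≤ r1 * σ1 / c11 := by
      rw [e1, e2]; exact mul_le_mul_of_nonneg_left hBiS1.le hr1.le
    exact (div_le_iff₀ hc21).1 (t2.trans (le_max_left _ _))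
  have hKρM : K * ρ < M := hgt
  set K'' := (K + M / ρ) / 2 with hK''def
  have hKK'' : K < K'' := by
    have : K < M / ρ := (lt_div_iff₀ hρ).2 hKρM
    rw [hK''def]; linarith
  have hK''pos : 0 < K'' := hK.trans hKK''
  have hK''ρ : K'' * ρ < M := by
    have e : K'' * ρ = (K * ρ + M) / 2 := by
      rw [hK''def]; field_simp
    rw [e]; linarith
  have hM1 : K'' * (d2 / d1) < M :=
    lt_of_le_of_lt (mul_le_mul_of_nonneg_left (le_max_right _ _) hK''pos.le) hK''ρ
  have hM2 : K'' * (d1 / d2) < M :=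
    lt_of_le_of_lt (mul_le_mul_of_nonneg_left (le_max_left _ _) hK''pos.le) hK''ρ
  have hfsign : ∀ y, K'' ≤ r1 * u y + r2 * v y → σ1 - c11 * u y - c12 * v y ≤ 0 := by
    intro y hy
    have t1 : 0 ≤ (K * c11 - σ1 * r1) * u y := mul_nonneg (by linarith) (hu0 y)
    have t2 : 0 ≤ (K * c12 - σ1 * r2) * v y := mul_nonneg (by linarith) (hv0 y)
    have t3 : 0 ≤ σ1 * (r1 * u y + r2 * v y - K) := mul_nonneg hσ1.le (by linarith)
    nlinarith [hK]
  have hgsign : ∀ y, K'' ≤ r1 * u y + r2 * v y → σ2 - c21 * u y - c22 * v y ≤ 0 := by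
    intro y hy
    have t1 : 0 ≤ (K * c21 - σ2 * r1) * u y := mul_nonneg (by linarith) (hu0 y)
    have t2 : 0 ≤ (K * c22 - σ2 * r2) * v y := mul_nonneg (by linarith) (hv0 y)
    have t3 : 0 ≤ σ2 * (r1 * u y + r2 * v y - K) := mul_nonneg hσ2.le (by linarith)
    nlinarith [hK]
  have hdp : deriv (fun z => r1 * u z) = fun z => r1 * deriv u z :=
    funext fun z => deriv_const_mul r1 (hu1 z)
  have hdq : deriv (fun z => r2 * v z) = fun z => r2 * deriv v z :=
    funext fun z => deriv_const_mul r2 (hv1 z)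
  have hHpdef : (fun z => d1 * (r1 * deriv u z) + θ * (r1 * u z))
      = fun y => d1 * deriv (fun z => r1 * u z) y + θ * (fun z => r1 * u z) y := by
    funext z; simp only [hdp]
  have hHqdef : (fun z => d2 * (r2 * deriv v z) + θ * (r2 * v z))
      = fun y => d2 * deriv (fun z => r2 * v z) y + θ * (fun z => r2 * v z) y := by
    funext z; simp only [hdq]
  have hHp : ∀ y, K'' ≤ r1 * u y + r2 * v y →
      0 ≤ deriv (fun z => d1 * (r1 * deriv u z) + θ * (r1 * u z)) y := by
    intro y hy
    have H : HasDerivAt (fun z => d1 * (r1 * deriv u z) + θ * (r1 * u z))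
        (d1 * (r1 * deriv (deriv u) y) + θ * (r1 * deriv u y)) y :=
      (((hu2 y).hasDerivAt.const_mul r1).const_mul d1).add
        (((hu1 y).hasDerivAt.const_mul r1).const_mul θ)
    rw [H.deriv]
    have hfs := hfsign y hy
    have heq2 : d1 * (r1 * deriv (deriv u) y) + θ * (r1 * deriv u y)
        = r1 * u y * (c11 * u y + c12 * v y - σ1) := by
      linear_combination r1 * hequ y
    rw [heq2]
    exact mul_nonneg (mul_nonneg hr1.le (hu0 y)) (by linarith)
  have hHq : ∀ y, K'' ≤ r1 * u y + r2 * v y →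
      0 ≤ deriv (fun z => d2 * (r2 * deriv v z) + θ * (r2 * v z)) y := by
    intro y hy
    have H : HasDerivAt (fun z => d2 * (r2 * deriv v z) + θ * (r2 * v z))
        (d2 * (r2 * deriv (deriv v) y) + θ * (r2 * deriv v y)) y :=
      (((hv2 y).hasDerivAt.const_mul r2).const_mul d2).add
        (((hv1 y).hasDerivAt.const_mul r2).const_mul θ)
    rw [H.deriv]
    have hgs := hgsign y hy
    have heq2 : d2 * (r2 * deriv (deriv v) y) + θ * (r2 * deriv v y)
        = r2 * v y * (c21 * u y + c22 * v y - σ2) := by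
      linear_combination r2 * heqv y
    rw [heq2]
    exact mul_nonneg (mul_nonneg hr2.le (hv0 y)) (by linarith)
  exact coreU d1 d2 θ K'' hd1 hd2 hθ hK''pos (fun z => r1 * u z) (fun z => r2 * v z)
    (hu1.const_mul r1) (hv1.const_mul r2)
    (by rw [hdp]; exact hu2.const_mul r1) (by rw [hdq]; exact hv2.const_mul r2)
    (fun x => mul_nonneg hr1.le (hu0 x)) (fun x => mul_nonneg hr2.le (hv0 x))
    _ _ hHpdef hHqdef hHp hHq
    (B := r1 * LU + r2 * LV) (lt_of_le_of_lt hL hKK'')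
    ((huP.const_mul r1).add (hvP.const_mul r2)) x1 hmax hM1 hM2

set_option maxHeartbeats 1000000 in
lemma lower_half (d1 d2 σ1 σ2 c11 c12 c21 c22 θ r1 r2 : ℝ)
    (hd1 : 0 < d1) (hd2 : 0 < d2) (hσ1 : 0 < σ1) (hσ2 : 0 < σ2)
    (hc11 : 0 < c11) (hc12 : 0 < c12) (hc21 : 0 < c21) (hc22 : 0 < c22)
    (hBiS1 : σ1 / c11 > σ2 / c21) (hBiS2 : σ2 / c22 > σ1 / c12)
    (hr1 : 0 < r1) (hr2 : 0 < r2) (hθ : 0 ≤ θ)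
    (u v : ℝ → ℝ)
    (hu1 : Differentiable ℝ u) (hv1 : Differentiable ℝ v)
    (hu2 : Differentiable ℝ (deriv u)) (hv2 : Differentiable ℝ (deriv v))
    (hu0 : ∀ x, 0 ≤ u x) (hv0 : ∀ x, 0 ≤ v x)
    (hequ : ∀ x, d1 * deriv (deriv u) x + θ * deriv u x
      + u x * (σ1 - c11 * u x - c12 * v x) = 0)
    (heqv : ∀ x, d2 * deriv (deriv v) x + θ * deriv v x
      + v x * (σ2 - c21 * u x - c22 * v x) = 0)
    (LU LV : ℝ) (huP : Tendsto u atTop (nhds LU)) (hvP : Tendsto v atTop (nhds LV))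
    (hL : min (r1 * σ2 / c21) (r2 * σ1 / c12) < r1 * LU + r2 * LV)
    (x1 : ℝ) (hmin : ∀ y, r1 * u x1 + r2 * v x1 ≤ r1 * u y + r2 * v y)
    (hlt : r1 * u x1 + r2 * v x1
      < min (r1 * σ2 / c21) (r2 * σ1 / c12) * min (d1 / d2) (d2 / d1)) :
    False := by
  set m := min (r1 * σ2 / c21) (r2 * σ1 / c12) with hmdef
  set ρ := min (d1 / d2) (d2 / d1) with hρdef
  set M := r1 * u x1 + r2 * v x1 with hMdef
  have hm : 0 < m := lt_min (by positivity) (by positivity)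
  have hρ : 0 < ρ := lt_min (by positivity) (by positivity)
  -- corner inequalities
  have dBA : m * c21 ≤ r1 * σ2 := (le_div_iff₀ hc21).1 (min_le_left _ _)
  have dAB : m * c12 ≤ r2 * σ1 := (le_div_iff₀ hc12).1 (min_le_right _ _)
  have dA : m * c11 ≤ r1 * σ1 := by
    have e1 : r1 * σ2 / c21 = r1 * (σ2 / c21) := mul_div_assoc _ _ _
    have e2 : r1 * σ1 / c11 = r1 * (σ1 / c11) := mul_div_assoc _ _ _
    have t2 : r1 * σ2 / c21 ≤ r1 * σ1 / c11 := by
      rw [e1, e2]; exact mul_le_mul_of_nonneg_left hBiS1.le hr1.le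
    exact (le_div_iff₀ hc11).1 ((min_le_left _ _).trans t2)
  have dB : m * c22 ≤ r2 * σ2 := by
    have e1 : r2 * σ1 / c12 = r2 * (σ1 / c12) := mul_div_assoc _ _ _
    have e2 : r2 * σ2 / c22 = r2 * (σ2 / c22) := mul_div_assoc _ _ _
    have t2 : r2 * σ1 / c12 ≤ r2 * σ2 / c22 := by
      rw [e1, e2]; exact mul_le_mul_of_nonneg_left hBiS2.le hr2.le
    exact (le_div_iff₀ hc22).1 ((min_le_right _ _).trans t2)
  have hMρm : M < m * ρ := hlt
  set m'' := (m + M / ρ) / 2 with hm''def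
  have hM0 : 0 ≤ M := by
    have := mul_nonneg hr1.le (hu0 x1)
    have := mul_nonneg hr2.le (hv0 x1)
    rw [hMdef]; linarith
  have hm''m : m'' < m := by
    have : M / ρ < m := (div_lt_iff₀ hρ).2 (by linarith [hMρm])
    rw [hm''def]; linarith
  have hm''pos : 0 < m'' := by
    have : 0 ≤ M / ρ := div_nonneg hM0 hρ.le
    rw [hm''def]; linarith
  have hm''ρ : M < m'' * ρ := by
    have e : m'' * ρ = (m * ρ + M) / 2 := by
      rw [hm''def]; field_simp
    rw [e]; linarith
  have hM1 : M < m'' * (d1 / d2) :=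
    lt_of_lt_of_le hm''ρ (mul_le_mul_of_nonneg_left (min_le_left _ _) hm''pos.le)
  have hM2 : M < m'' * (d2 / d1) :=
    lt_of_lt_of_le hm''ρ (mul_le_mul_of_nonneg_left (min_le_right _ _) hm''pos.le)
  -- sign conditions
  have hfsign : ∀ y, r1 * u y + r2 * v y ≤ m'' → 0 ≤ σ1 - c11 * u y - c12 * v y := by
    intro y hy
    have t1 : 0 ≤ (r1 * σ1 - m * c11) * u y := mul_nonneg (by linarith) (hu0 y)
    have t2 : 0 ≤ (r2 * σ1 - m * c12) * v y := mul_nonneg (by linarith) (hv0 y)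
    have t3 : 0 ≤ σ1 * (m - (r1 * u y + r2 * v y)) := mul_nonneg hσ1.le (by linarith)
    nlinarith [hm]
  have hgsign : ∀ y, r1 * u y + r2 * v y ≤ m'' → 0 ≤ σ2 - c21 * u y - c22 * v y := by
    intro y hy
    have t1 : 0 ≤ (r1 * σ2 - m * c21) * u y := mul_nonneg (by linarith) (hu0 y)
    have t2 : 0 ≤ (r2 * σ2 - m * c22) * v y := mul_nonneg (by linarith) (hv0 y)
    have t3 : 0 ≤ σ2 * (m - (r1 * u y + r2 * v y)) := mul_nonneg hσ2.le (by linarith)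
    nlinarith [hm]
  have hdp : deriv (fun z => r1 * u z) = fun z => r1 * deriv u z :=
    funext fun z => deriv_const_mul r1 (hu1 z)
  have hdq : deriv (fun z => r2 * v z) = fun z => r2 * deriv v z :=
    funext fun z => deriv_const_mul r2 (hv1 z)
  have hHpdef : (fun z => d1 * (r1 * deriv u z) + θ * (r1 * u z))
      = fun y => d1 * deriv (fun z => r1 * u z) y + θ * (fun z => r1 * u z) y := by
    funext z; simp only [hdp]
  have hHqdef : (fun z => d2 * (r2 * deriv v z) + θ * (r2 * v z))
      = fun y => d2 * deriv (fun z => r2 * v z) y + θ * (fun z => r2 * v z) y := by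
    funext z; simp only [hdq]
  have hHp : ∀ y, r1 * u y + r2 * v y ≤ m'' →
      deriv (fun z => d1 * (r1 * deriv u z) + θ * (r1 * u z)) y ≤ 0 := by
    intro y hy
    have H : HasDerivAt (fun z => d1 * (r1 * deriv u z) + θ * (r1 * u z))
        (d1 * (r1 * deriv (deriv u) y) + θ * (r1 * deriv u y)) y :=
      (((hu2 y).hasDerivAt.const_mul r1).const_mul d1).add
        (((hu1 y).hasDerivAt.const_mul r1).const_mul θ)
    rw [H.deriv]
    have hfs := hfsign y hy
    have heq2 : d1 * (r1 * deriv (deriv u) y) + θ * (r1 * deriv u y)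
        = r1 * u y * (c11 * u y + c12 * v y - σ1) := by
      linear_combination r1 * hequ y
    rw [heq2]
    have := mul_nonneg (mul_nonneg hr1.le (hu0 y)) hfs
    nlinarith [this]
  have hHq : ∀ y, r1 * u y + r2 * v y ≤ m'' →
      deriv (fun z => d2 * (r2 * deriv v z) + θ * (r2 * v z)) y ≤ 0 := by
    intro y hy
    have H : HasDerivAt (fun z => d2 * (r2 * deriv v z) + θ * (r2 * v z))
        (d2 * (r2 * deriv (deriv v) y) + θ * (r2 * deriv v y)) y :=
      (((hv2 y).hasDerivAt.const_mul r2).const_mul d2).add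
        (((hv1 y).hasDerivAt.const_mul r2).const_mul θ)
    rw [H.deriv]
    have hgs := hgsign y hy
    have heq2 : d2 * (r2 * deriv (deriv v) y) + θ * (r2 * deriv v y)
        = r2 * v y * (c21 * u y + c22 * v y - σ2) := by
      linear_combination r2 * heqv y
    rw [heq2]
    have := mul_nonneg (mul_nonneg hr2.le (hv0 y)) hgs
    nlinarith [this]
  exact coreL d1 d2 θ m'' hd1 hd2 hθ hm''pos (fun z => r1 * u z) (fun z => r2 * v z)
    (hu1.const_mul r1) (hv1.const_mul r2)
    (by rw [hdp]; exact hu2.const_mul r1) (by rw [hdq]; exact hv2.const_mul r2)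
    (fun x => mul_nonneg hr1.le (hu0 x)) (fun x => mul_nonneg hr2.le (hv0 x))
    _ _ hHpdef hHqdef hHp hHq
    (B := r1 * LU + r2 * LV) (lt_of_lt_of_le (lt_of_le_of_lt hm''m.le hL) le_rfl)
    ((huP.const_mul r1).add (hvP.const_mul r2)) x1 hmin hM1 hM2

set_option maxHeartbeats 1000000 in
/-- Bounds for `r1 u(x) + r2 v(x)` for the unscaled two-species Lotka-Volterra
system under the bistable condition [BiS]. -/
theorem lv_unscaled_bounds_r1u_plus_r2v
    (d1 d2 σ1 σ2 c11 c12 c21 c22 θ r1 r2 : ℝ)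
    (hd1 : 0 < d1) (hd2 : 0 < d2) (hσ1 : 0 < σ1) (hσ2 : 0 < σ2)
    (hc11 : 0 < c11) (hc12 : 0 < c12) (hc21 : 0 < c21) (hc22 : 0 < c22)
    (hBiS1 : σ1 / c11 > σ2 / c21) (hBiS2 : σ2 / c22 > σ1 / c12)
    (hr1 : 0 < r1) (hr2 : 0 < r2)
    (u v : ℝ → ℝ)
    (hu : ContDiff ℝ 2 u) (hv : ContDiff ℝ 2 v)
    (hu0 : ∀ x, 0 ≤ u x) (hv0 : ∀ x, 0 ≤ v x)
    (hequ : ∀ x, d1 * deriv (deriv u) x + θ * deriv u x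
      + u x * (σ1 - c11 * u x - c12 * v x) = 0)
    (heqv : ∀ x, d2 * deriv (deriv v) x + θ * deriv v x
      + v x * (σ2 - c21 * u x - c22 * v x) = 0)
    (huM : Tendsto u atBot (nhds (σ1 / c11))) (hvM : Tendsto v atBot (nhds 0))
    (huP : Tendsto u atTop (nhds 0)) (hvP : Tendsto v atTop (nhds (σ2 / c22))) :
    ∀ x : ℝ,
      min (r1 * σ2 / c21) (r2 * σ1 / c12) * min (d1 / d2) (d2 / d1)
        ≤ r1 * u x + r2 * v x ∧
      r1 * u x + r2 * v x
        ≤ max (r1 * σ1 / c11) (r2 * σ2 / c22) * max (d1 / d2) (d2 / d1) := by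
  intro x
  -- differentiability facts
  have hu1 : Differentiable ℝ u := hu.differentiable (by norm_num)
  have hv1 : Differentiable ℝ v := hv.differentiable (by norm_num)
  have hu2 : Differentiable ℝ (deriv u) :=
    ((contDiff_succ_iff_deriv (n := 1)).mp (by exact_mod_cast hu)).2.2.differentiable (by norm_num)
  have hv2 : Differentiable ℝ (deriv v) :=
    ((contDiff_succ_iff_deriv (n := 1)).mp (by exact_mod_cast hv)).2.2.differentiable (by norm_num)
  -- reflected functions and their facts
  have hU1 : Differentiable ℝ (fun z => u (-z)) := hu1.comp differentiable_neg
  have hV1 : Differentiable ℝ (fun z => v (-z)) := hv1.comp differentiable_neg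
  have hdU : deriv (fun z => u (-z)) = fun z => -deriv u (-z) :=
    funext fun z => deriv_comp_neg u z
  have hdV : deriv (fun z => v (-z)) = fun z => -deriv v (-z) :=
    funext fun z => deriv_comp_neg v z
  have hU2 : Differentiable ℝ (deriv (fun z => u (-z))) := by
    rw [hdU]; exact (hu2.comp differentiable_neg).neg
  have hV2 : Differentiable ℝ (deriv (fun z => v (-z))) := by
    rw [hdV]; exact (hv2.comp differentiable_neg).neg
  have hU2d : ∀ z, deriv (deriv (fun z => u (-z))) z = deriv (deriv u) (-z) := by
    intro z
    rw [hdU]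
    have h1 : deriv (fun w => -deriv u (-w)) z = -deriv (fun w => deriv u (-w)) z := deriv.neg
    rw [h1, deriv_comp_neg (deriv u) z]; ring
  have hV2d : ∀ z, deriv (deriv (fun z => v (-z))) z = deriv (deriv v) (-z) := by
    intro z
    rw [hdV]
    have h1 : deriv (fun w => -deriv v (-w)) z = -deriv (fun w => deriv v (-w)) z := deriv.neg
    rw [h1, deriv_comp_neg (deriv v) z]; ring
  have hdUz : ∀ z, deriv (fun z => u (-z)) z = -deriv u (-z) := by
    intro z; rw [hdU]
  have hdVz : ∀ z, deriv (fun z => v (-z)) z = -deriv v (-z) := by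
    intro z; rw [hdV]
  have hUeq : ∀ z, d1 * deriv (deriv (fun z => u (-z))) z + (-θ) * deriv (fun z => u (-z)) z
      + u (-z) * (σ1 - c11 * u (-z) - c12 * v (-z)) = 0 := by
    intro z
    rw [hU2d z, hdUz z]
    linear_combination hequ (-z)
  have hVeq : ∀ z, d2 * deriv (deriv (fun z => v (-z))) z + (-θ) * deriv (fun z => v (-z)) z
      + v (-z) * (σ2 - c21 * u (-z) - c22 * v (-z)) = 0 := by
    intro z
    rw [hV2d z, hdVz z]
    linear_combination heqv (-z)
  have hUP : Tendsto (fun z => u (-z)) atTop (nhds (σ1 / c11)) :=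
    huM.comp tendsto_neg_atTop_atBot
  have hVP : Tendsto (fun z => v (-z)) atTop (nhds 0) :=
    hvM.comp tendsto_neg_atTop_atBot
  -- continuity and limits of w
  have hwc : Continuous (fun y => r1 * u y + r2 * v y) :=
    (continuous_const.mul hu1.continuous).add (continuous_const.mul hv1.continuous)
  have hbotw : Tendsto (fun y => r1 * u y + r2 * v y) atBot
      (nhds (r1 * (σ1 / c11) + r2 * 0)) := (huM.const_mul r1).add (hvM.const_mul r2)
  have htopw : Tendsto (fun y => r1 * u y + r2 * v y) atTop
      (nhds (r1 * 0 + r2 * (σ2 / c22))) := (huP.const_mul r1).add (hvP.const_mul r2)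
  -- elementary constants
  have hρ1 : (1:ℝ) ≤ max (d1 / d2) (d2 / d1) := by
    rcases le_total d1 d2 with h | h
    · exact le_trans ((one_le_div hd1).2 h) (le_max_right _ _)
    · exact le_trans ((one_le_div hd2).2 h) (le_max_left _ _)
  have hρm1 : min (d1 / d2) (d2 / d1) ≤ 1 := by
    rcases le_total d1 d2 with h | h
    · exact le_trans (min_le_left _ _) ((div_le_one hd2).2 h)
    · exact le_trans (min_le_right _ _) ((div_le_one hd1).2 h)
  have hKpos : 0 < max (r1 * σ1 / c11) (r2 * σ2 / c22) :=
    lt_of_lt_of_le (by positivity) (le_max_left _ _)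
  have hmpos : 0 < min (r1 * σ2 / c21) (r2 * σ1 / c12) :=
    lt_min (by positivity) (by positivity)
  have hmA : min (r1 * σ2 / c21) (r2 * σ1 / c12) < r1 * (σ1 / c11) + r2 * 0 := by
    have t1 : min (r1 * σ2 / c21) (r2 * σ1 / c12) ≤ r1 * σ2 / c21 := min_le_left _ _
    have e1 : r1 * σ2 / c21 = r1 * (σ2 / c21) := mul_div_assoc _ _ _
    have t2 : r1 * (σ2 / c21) < r1 * (σ1 / c11) := mul_lt_mul_of_pos_left hBiS1 hr1
    linarith [e1.le, e1.ge]
  have hmB : min (r1 * σ2 / c21) (r2 * σ1 / c12) < r1 * 0 + r2 * (σ2 / c22) := by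
    have t1 : min (r1 * σ2 / c21) (r2 * σ1 / c12) ≤ r2 * σ1 / c12 := min_le_right _ _
    have e1 : r2 * σ1 / c12 = r2 * (σ1 / c12) := mul_div_assoc _ _ _
    have t2 : r2 * (σ1 / c12) < r2 * (σ2 / c22) := mul_lt_mul_of_pos_left hBiS2 hr2
    linarith [e1.le, e1.ge]
  have hAK : r1 * (σ1 / c11) + r2 * 0 ≤ max (r1 * σ1 / c11) (r2 * σ2 / c22) := by
    have e : r1 * (σ1 / c11) + r2 * 0 = r1 * σ1 / c11 := by ring
    rw [e]; exact le_max_left _ _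
  have hBK : r1 * 0 + r2 * (σ2 / c22) ≤ max (r1 * σ1 / c11) (r2 * σ2 / c22) := by
    have e : r1 * 0 + r2 * (σ2 / c22) = r2 * σ2 / c22 := by ring
    rw [e]; exact le_max_right _ _
  constructor
  · -- lower bound
    by_contra hcon
    push_neg at hcon
    have hmm : min (r1 * σ2 / c21) (r2 * σ1 / c12) * min (d1 / d2) (d2 / d1)
        ≤ min (r1 * σ2 / c21) (r2 * σ1 / c12) := mul_le_of_le_one_right hmpos.le hρm1
    have hconm : r1 * u x + r2 * v x < min (r1 * σ2 / c21) (r2 * σ1 / c12) :=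
      lt_of_lt_of_le hcon hmm
    have h1 : -(r1 * (σ1 / c11) + r2 * 0) < -(r1 * u x + r2 * v x) := by linarith
    have h2 : -(r1 * 0 + r2 * (σ2 / c22)) < -(r1 * u x + r2 * v x) := by linarith
    obtain ⟨x1, hx1⟩ := exists_forall_le_of_tendsto
      (w := fun y => -(r1 * u y + r2 * v y)) hwc.neg hbotw.neg htopw.neg h1 h2
    have hminx1 : ∀ y, r1 * u x1 + r2 * v x1 ≤ r1 * u y + r2 * v y := by
      intro y; have := hx1 y; linarith
    have hltx1 : r1 * u x1 + r2 * v x1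
        < min (r1 * σ2 / c21) (r2 * σ1 / c12) * min (d1 / d2) (d2 / d1) :=
      lt_of_le_of_lt (hminx1 x) hcon
    rcases le_or_gt 0 θ with hθ0 | hθneg
    · exact lower_half d1 d2 σ1 σ2 c11 c12 c21 c22 θ r1 r2 hd1 hd2 hσ1 hσ2
        hc11 hc12 hc21 hc22 hBiS1 hBiS2 hr1 hr2 hθ0 u v hu1 hv1 hu2 hv2 hu0 hv0
        hequ heqv 0 (σ2 / c22) huP hvP hmB x1 hminx1 hltx1
    · have hminU : ∀ y, r1 * u (- -x1) + r2 * v (- -x1) ≤ r1 * u (-y) + r2 * v (-y) := by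
        intro y; rw [neg_neg]; exact hminx1 (-y)
      have hltU : r1 * u (- -x1) + r2 * v (- -x1)
          < min (r1 * σ2 / c21) (r2 * σ1 / c12) * min (d1 / d2) (d2 / d1) := by
        rw [neg_neg]; exact hltx1
      exact lower_half d1 d2 σ1 σ2 c11 c12 c21 c22 (-θ) r1 r2 hd1 hd2 hσ1 hσ2
        hc11 hc12 hc21 hc22 hBiS1 hBiS2 hr1 hr2 (by linarith)
        (fun z => u (-z)) (fun z => v (-z)) hU1 hV1 hU2 hV2
        (fun z => hu0 (-z)) (fun z => hv0 (-z)) hUeq hVeq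
        (σ1 / c11) 0 hUP hVP hmA (-x1) hminU hltU
  · -- upper bound
    by_contra hcon
    push_neg at hcon
    have hKKρ : max (r1 * σ1 / c11) (r2 * σ2 / c22)
        ≤ max (r1 * σ1 / c11) (r2 * σ2 / c22) * max (d1 / d2) (d2 / d1) :=
      le_mul_of_one_le_right hKpos.le hρ1
    have h1 : r1 * (σ1 / c11) + r2 * 0 < r1 * u x + r2 * v x := by
      have := hAK; linarith
    have h2 : r1 * 0 + r2 * (σ2 / c22) < r1 * u x + r2 * v x := by
      have := hBK; linarith
    obtain ⟨x1, hx1⟩ := exists_forall_le_of_tendsto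
      (w := fun y => r1 * u y + r2 * v y) hwc hbotw htopw h1 h2
    have hgt : max (r1 * σ1 / c11) (r2 * σ2 / c22) * max (d1 / d2) (d2 / d1)
        < r1 * u x1 + r2 * v x1 := lt_of_lt_of_le hcon (hx1 x)
    rcases le_or_gt 0 θ with hθ0 | hθneg
    · exact upper_half d1 d2 σ1 σ2 c11 c12 c21 c22 θ r1 r2 hd1 hd2 hσ1 hσ2
        hc11 hc12 hc21 hc22 hBiS1 hBiS2 hr1 hr2 hθ0 u v hu1 hv1 hu2 hv2 hu0 hv0
        hequ heqv 0 (σ2 / c22) huP hvP hBK x1 hx1 hgt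
    · have hmaxU : ∀ y, r1 * u (-y) + r2 * v (-y) ≤ r1 * u (- -x1) + r2 * v (- -x1) := by
        intro y; rw [neg_neg]; exact hx1 (-y)
      have hgtU : max (r1 * σ1 / c11) (r2 * σ2 / c22) * max (d1 / d2) (d2 / d1)
          < r1 * u (- -x1) + r2 * v (- -x1) := by
        rw [neg_neg]; exact hgt
      exact upper_half d1 d2 σ1 σ2 c11 c12 c21 c22 (-θ) r1 r2 hd1 hd2 hσ1 hσ2
        hc11 hc12 hc21 hc22 hBiS1 hBiS2 hr1 hr2 (by linarith)
        (fun z => u (-z)) (fun z => v (-z)) hU1 hV1 hU2 hV2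
        (fun z => hu0 (-z)) (fun z => hv0 (-z)) hUeq hVeq
        (σ1 / c11) 0 hUP hVP hAK (-x1) hmaxU hgtU
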